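/- Let μ and μ_i be Radon measures on ℝⁿ and let T, T_i : ℝⁿ → ℝⁿ be proper homeomorphisms, i.e., homeomorphisms such that preimages of compact sets are compact. If μ_i → μ in the weak-* topology and T_i → T and T_i^{-1} → T^{-1} uniformly on compact subsets of ℝⁿ, then T_i[μ_i] → T[μ] in the weak-* topology. -/
import Mathlib


open MeasureTheory Metric Filter Topology ENNReal Set
open scoped RealInnerProductSpace

noncomputable section

/-- Euclidean space `ℝⁿ`. -/
abbrev Euc (n : ℕ) := EuclideanSpace ℝ (Fin n)

/-- Weak-* convergence of a sequence of measures, tested against continuous compactly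
supported functions. -/
def WStarTendsto {n : ℕ} (μs : ℕ → Measure (Euc n)) (ν : Measure (Euc n)) : Prop :=
  ∀ f : Euc n → ℝ, Continuous f → HasCompactSupport f →
    Tendsto (fun i => ∫ x, f x ∂(μs i)) atTop (𝓝 (∫ x, f x ∂ν))

/-- The rescaling map `T_{a,r}(y) = (y - a)/r`. -/
def resc {n : ℕ} (a : Euc n) (r : ℝ) : Euc n → Euc n := fun y => r⁻¹ • (y - a)

/-- The image measure `T_{a,r}[μ]`, so that `T_{a,r}[μ](E) = μ(a + rE)`. -/
def rescMeas {n : ℕ} (a : Euc n) (r : ℝ) (μ : Measure (Euc n)) : Measure (Euc n) :=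
  Measure.map (resc a r) μ

/-- Tangent measures of `μ` at `a`. -/
def Tangent {n : ℕ} (μ : Measure (Euc n)) (a : Euc n) : Set (Measure (Euc n)) :=
  { ν | ν ≠ 0 ∧ ∃ c r : ℕ → ℝ, (∀ i, 0 < c i) ∧ (∀ i, 0 < r i) ∧
      Tendsto r atTop (𝓝 0) ∧
      WStarTendsto (fun i => ENNReal.ofReal (c i) • rescMeas a (r i) μ) ν }

/-- The anisotropic rescaling map `T^Λ_{a,r}(y) = Λ(a)⁻¹((y - a)/r)`. -/
def rescL {n : ℕ} (Λ : Euc n → (Euc n ≃L[ℝ] Euc n)) (a : Euc n) (r : ℝ) : Euc n → Euc n :=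
  fun y => (Λ a).symm (r⁻¹ • (y - a))

/-- The image measure `T^Λ_{a,r}[μ]`, so that `T^Λ_{a,r}[μ](E) = μ(a + r Λ(a) E)`. -/
def rescLMeas {n : ℕ} (Λ : Euc n → (Euc n ≃L[ℝ] Euc n)) (a : Euc n) (r : ℝ)
    (μ : Measure (Euc n)) : Measure (Euc n) :=
  Measure.map (rescL Λ a r) μ

/-- `Λ`-tangent measures of `μ` at `a`. -/
def TangentL {n : ℕ} (Λ : Euc n → (Euc n ≃L[ℝ] Euc n)) (μ : Measure (Euc n)) (a : Euc n) :
    Set (Measure (Euc n)) :=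
  { ν | ν ≠ 0 ∧ ∃ c r : ℕ → ℝ, (∀ i, 0 < c i) ∧ (∀ i, 0 < r i) ∧
      Tendsto r atTop (𝓝 0) ∧
      WStarTendsto (fun i => ENNReal.ofReal (c i) • rescLMeas Λ a (r i) μ) ν }

/-- The support of a measure: points all of whose neighborhoods have positive measure. -/
def sptM {n : ℕ} (ν : Measure (Euc n)) : Set (Euc n) :=
  { x | ∀ r : ℝ, 0 < r → 0 < ν (ball x r) }

/-- The ellipse `B_M(a,r) = a + M B(0,r)` associated to an invertible matrix `M`. -/
def ellB {n : ℕ} (M : Euc n ≃L[ℝ] Euc n) (a : Euc n) (r : ℝ) : Set (Euc n) :=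
  (fun v => a + M v) '' closedBall (0 : Euc n) r

/-- Upper `m`-dimensional `M`-density `θ^{m,*}_M(μ,a)`. -/
def upperDM {n : ℕ} (m : ℕ) (M : Euc n ≃L[ℝ] Euc n) (μ : Measure (Euc n)) (a : Euc n) :
    ℝ≥0∞ :=
  limsup (fun r : ℝ => μ (ellB M a r) / ENNReal.ofReal (r ^ m)) (𝓝[>] 0)

/-- Lower `m`-dimensional `M`-density `θ^m_{M,*}(μ,a)`. -/
def lowerDM {n : ℕ} (m : ℕ) (M : Euc n ≃L[ℝ] Euc n) (μ : Measure (Euc n)) (a : Euc n) :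
    ℝ≥0∞ :=
  liminf (fun r : ℝ => μ (ellB M a r) / ENNReal.ofReal (r ^ m)) (𝓝[>] 0)

/-- Upper `m`-dimensional `Λ`-density `θ^{m,*}_Λ(μ,a)`. -/
def upperDL {n : ℕ} (m : ℕ) (Λ : Euc n → (Euc n ≃L[ℝ] Euc n)) (μ : Measure (Euc n))
    (a : Euc n) : ℝ≥0∞ :=
  upperDM m (Λ a) μ a

/-- Lower `m`-dimensional `Λ`-density `θ^m_{Λ,*}(μ,a)`. -/
def lowerDL {n : ℕ} (m : ℕ) (Λ : Euc n → (Euc n ≃L[ℝ] Euc n)) (μ : Measure (Euc n))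
    (a : Euc n) : ℝ≥0∞ :=
  lowerDM m (Λ a) μ a

/-- The `m`-dimensional `Λ`-density of `μ` at `a` exists and equals `d`. -/
def LDensityIs {n : ℕ} (m : ℕ) (Λ : Euc n → (Euc n ≃L[ℝ] Euc n)) (μ : Measure (Euc n))
    (a : Euc n) (d : ℝ≥0∞) : Prop :=
  Tendsto (fun r : ℝ => μ (ellB (Λ a) a r) / ENNReal.ofReal (r ^ m)) (𝓝[>] 0) (𝓝 d)

/-- Lower `m`-density `θ^m_*(μ,a)` with respect to Euclidean balls. -/
def lowerD {n : ℕ} (m : ℕ) (μ : Measure (Euc n)) (a : Euc n) : ℝ≥0∞ :=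
  liminf (fun r : ℝ => μ (closedBall a r) / ENNReal.ofReal (r ^ m)) (𝓝[>] 0)

/-- `μ` is countably `m`-rectifiable: `μ ≪ H^m` and `μ`-almost all of `ℝⁿ` is covered by
countably many Lipschitz images of `ℝ^m`. -/
def CountablyRect (n m : ℕ) (μ : Measure (Euc n)) : Prop :=
  μ ≪ (μH[(m : ℝ)] : Measure (Euc n)) ∧
    ∃ f : ℕ → (Euc m → Euc n), (∀ i, ∃ K : NNReal, LipschitzWith K (f i)) ∧
      μ (univ \ ⋃ i, range (f i)) = 0

/-- `m`-dimensional flat measures `M_{n,m}`: multiples `c H^m ⌞ V` of Hausdorff measure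
restricted to `m`-dimensional linear subspaces, `0 < c < ∞`. -/
def FlatMeas (n m : ℕ) : Set (Measure (Euc n)) :=
  { μ | ∃ V : Submodule ℝ (Euc n), Module.finrank ℝ V = m ∧
      ∃ c : ℝ≥0∞, 0 < c ∧ c ≠ ⊤ ∧
        μ = c • ((μH[(m : ℝ)] : Measure (Euc n)).restrict V) }

/-- Flat measures `M_n = ∪_{m=0}^n M_{n,m}`. -/
def FlatMeasAll (n : ℕ) : Set (Measure (Euc n)) :=
  { μ | ∃ m ≤ n, μ ∈ FlatMeas n m }

/-- Existence of the principal value `T^m_Λ μ(x)`. -/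
def pvExists {n : ℕ} (m : ℕ) (Λ : Euc n → (Euc n ≃L[ℝ] Euc n)) (μ : Measure (Euc n))
    (x : Euc n) : Prop :=
  ∃ L : Euc n, Tendsto (fun ε : ℝ =>
      ∫ y in {y : Euc n | ε ≤ ‖(Λ x).symm (y - x)‖},
        (‖(Λ x).symm (y - x)‖ ^ (m + 1))⁻¹ • (Λ x).symm (y - x) ∂μ)
    (𝓝[>] 0) (𝓝 L)

/-- The set of numbers `∫ f dμ - ∫ f dν` over `1`-Lipschitz `f` supported in `B(0,r)`. -/
def FrSet {n : ℕ} (r : ℝ) (μ ν : Measure (Euc n)) : Set ℝ :=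
  { t | ∃ f : Euc n → ℝ, LipschitzWith 1 f ∧ tsupport f ⊆ closedBall (0 : Euc n) r ∧
      t = (∫ x, f x ∂μ) - ∫ x, f x ∂ν }

/-- The quantity `F_r(μ,ν)`. -/
def Fdist {n : ℕ} (r : ℝ) (μ ν : Measure (Euc n)) : ℝ := sSup (FrSet r μ ν)

/-- `F_r(μ) < ∞`. -/
def FdistFinite {n : ℕ} (r : ℝ) (μ : Measure (Euc n)) : Prop := BddAbove (FrSet r μ 0)

/-- The distance `d_s(ν, M)` from `ν` to a d-cone `M` at scale `s`. -/
def dDist {n : ℕ} (s : ℝ) (ν : Measure (Euc n)) (M : Set (Measure (Euc n))) : ℝ :=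
  letI := Classical.propDecidable (0 < Fdist s ν (0 : Measure (Euc n)) ∧ FdistFinite s ν)
  if 0 < Fdist s ν (0 : Measure (Euc n)) ∧ FdistFinite s ν then
    sInf { t | ∃ μ' ∈ M, Fdist s μ' (0 : Measure (Euc n)) = 1 ∧
      t = Fdist s ((ENNReal.ofReal (Fdist s ν (0 : Measure (Euc n))))⁻¹ • ν) μ' }
  else 1

/-- `c T_{0,r}[μ]`. -/
def scaleMeas {n : ℕ} (c r : ℝ) (μ : Measure (Euc n)) : Measure (Euc n) :=
  ENNReal.ofReal c • rescMeas (0 : Euc n) r μ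

/-- A collection of nonzero measures closed under `μ ↦ c T_{0,r}[μ]`. -/
def IsDCone {n : ℕ} (M : Set (Measure (Euc n))) : Prop :=
  (∀ μ ∈ M, μ ≠ 0) ∧ ∀ μ ∈ M, ∀ c r : ℝ, 0 < c → 0 < r → scaleMeas c r μ ∈ M

/-- Membership in the basis of a d-cone. -/
def InBasis {n : ℕ} (M : Set (Measure (Euc n))) (μ : Measure (Euc n)) : Prop :=
  μ ∈ M ∧ Fdist 1 μ (0 : Measure (Euc n)) = 1

/-- The basis of `M` is weak-* (sequentially) closed. -/
def HasClosedBasis {n : ℕ} (M : Set (Measure (Euc n))) : Prop :=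
  ∀ (μs : ℕ → Measure (Euc n)) (ν : Measure (Euc n)),
    (∀ i, InBasis M (μs i)) → WStarTendsto μs ν → InBasis M ν

/-- The basis of `M` is weak-* (sequentially) compact. -/
def HasCompactBasis {n : ℕ} (M : Set (Measure (Euc n))) : Prop :=
  ∀ μs : ℕ → Measure (Euc n), (∀ i, InBasis M (μs i)) →
    ∃ φ : ℕ → ℕ, StrictMono φ ∧ ∃ ν, InBasis M ν ∧ WStarTendsto (fun k => μs (φ k)) ν

/-- `M` is weak-* (sequentially) closed as a collection of nonzero measures. -/
def IsClosedCone {n : ℕ} (M : Set (Measure (Euc n))) : Prop :=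
  ∀ (μs : ℕ → Measure (Euc n)) (ν : Measure (Euc n)),
    (∀ i, μs i ∈ M) → WStarTendsto μs ν → ν ≠ 0 → ν ∈ M

/-- `m`-uniform measures `U^m(ℝⁿ)`. -/
def UniformMeas (n m : ℕ) : Set (Measure (Euc n)) :=
  { ν | (0 : Euc n) ∈ sptM ν ∧ ∃ c : ℝ, 0 < c ∧
      ∀ x ∈ sptM ν, ∀ r : ℝ, 0 < r → ν (closedBall x r) = ENNReal.ofReal (c * r ^ m) }

/-- Symmetric measures: every point of the support is a point of symmetry. -/
def IsSymMeas {n : ℕ} (ν : Measure (Euc n)) : Prop :=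
  ∀ x ∈ sptM ν, ∀ y : Euc n, ∀ r : ℝ, 0 < r →
    (∫ z in closedBall x r, ⟪z - x, y⟫ ∂ν) = 0

/-- The d-cone `S_n` of nonzero symmetric measures whose support contains `0`. -/
def SymCone (n : ℕ) : Set (Measure (Euc n)) :=
  { ν | ν ≠ 0 ∧ (0 : Euc n) ∈ sptM ν ∧ IsSymMeas ν }

/-- Weak-* convergence of image measures under a locally uniformly
converging sequence of proper homeomorphisms. -/
theorem stmt1 {n : ℕ} (μ : Measure (Euc n)) (μs : ℕ → Measure (Euc n))
    [IsLocallyFiniteMeasure μ] (hμs : ∀ i, IsLocallyFiniteMeasure (μs i))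
    (T : Euc n ≃ₜ Euc n) (Ts : ℕ → (Euc n ≃ₜ Euc n))
    (hT : IsProperMap (T : Euc n → Euc n))
    (hTs : ∀ i, IsProperMap ((Ts i : Euc n → Euc n)))
    (hconv : WStarTendsto μs μ)
    (hTconv : ∀ K : Set (Euc n), IsCompact K →
      TendstoUniformlyOn (fun i x => Ts i x) (fun x => T x) atTop K)
    (hTinvconv : ∀ K : Set (Euc n), IsCompact K →
      TendstoUniformlyOn (fun i x => (Ts i).symm x) (fun x => T.symm x) atTop K) :
    WStarTendsto (fun i => Measure.map (Ts i) (μs i)) (Measure.map T μ) := by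
  intro f hfc hfs
  -- the compact support of f
  set S : Set (Euc n) := tsupport f with hS
  have hScompact : IsCompact S := hfs
  -- the big compact set K
  set K : Set (Euc n) := Metric.cthickening 1 (T.symm '' S) with hK
  have hTsymmS : IsCompact (T.symm '' S) := hScompact.image T.symm.continuous
  have hKcompact : IsCompact K := hTsymmS.cthickening
  have hKclosed : IsClosed K := Metric.isClosed_cthickening
  have hsub0 : T.symm '' S ⊆ K := Metric.self_subset_cthickening _
  -- f ∘ T is continuous with compact support
  have hfTc : Continuous (f ∘ T) := hfc.comp T.continuous
  have hfT_supp : HasCompactSupport (f ∘ T) := by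
    have h1 : tsupport (f ∘ T) ⊆ (T : Euc n → Euc n) ⁻¹' S := by
      apply closure_minimal _ (hScompact.isClosed.preimage T.continuous)
      intro x hx
      exact subset_tsupport f hx
    exact IsCompact.of_isClosed_subset (hT.isCompact_preimage hScompact)
      (isClosed_tsupport _) h1
  have hfT_suppK : tsupport (f ∘ T) ⊆ K := by
    apply closure_minimal _ hKclosed
    intro x hx
    have : T x ∈ S := subset_tsupport f hx
    exact hsub0 ⟨T x, this, by simp⟩
  -- supports of f ∘ Ts i are eventually in K
  have hsuppev : ∀ᶠ i in atTop, tsupport (f ∘ (Ts i)) ⊆ K := by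
    have := (Metric.tendstoUniformlyOn_iff.1 (hTinvconv S hScompact)) 1 one_pos
    filter_upwards [this] with i hi
    apply closure_minimal _ hKclosed
    intro x hx
    have hTx : Ts i x ∈ S := subset_tsupport f hx
    have hx' : x = (Ts i).symm (Ts i x) := by simp
    have hdd : dist ((Ts i).symm (Ts i x)) (T.symm (Ts i x)) < 1 := by
      have := hi (Ts i x) hTx
      simpa [dist_comm] using this
    apply Metric.thickening_subset_cthickening _ _
    refine Metric.mem_thickening_iff.2 ⟨T.symm (Ts i x), ⟨Ts i x, hTx, rfl⟩, ?_⟩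
    nth_rewrite 1 [hx']
    exact hdd
  -- uniform continuity of f
  have hfu : UniformContinuous f :=
    hfc.uniformContinuous_of_tendsto_cocompact hfs.is_zero_at_infty
  -- the bump function g : 1 on K, compactly supported, 0 ≤ g ≤ 1
  obtain ⟨g, hg1, -, hgsupp, hg01⟩ :=
    exists_continuous_one_zero_of_isCompact hKcompact isClosed_empty
      (disjoint_empty _)
  have hgc : Continuous g := g.continuous
  have hgnonneg : ∀ x, 0 ≤ g x := fun x => (hg01 x).1
  -- integrability facts
  have hint_fT : ∀ i, Integrable (f ∘ T) (μs i) := fun i => by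
    haveI := hμs i
    exact hfTc.integrable_of_hasCompactSupport hfT_supp
  have hint_fTs : ∀ i, Integrable (f ∘ (Ts i)) (μs i) := fun i => by
    haveI := hμs i
    refine (hfc.comp (Ts i).continuous).integrable_of_hasCompactSupport ?_
    have h1 : tsupport (f ∘ (Ts i)) ⊆ ((Ts i : Euc n → Euc n)) ⁻¹' S := by
      apply closure_minimal _ (hScompact.isClosed.preimage (Ts i).continuous)
      intro x hx
      exact subset_tsupport f hx
    exact IsCompact.of_isClosed_subset ((hTs i).isCompact_preimage hScompact)
      (isClosed_tsupport _) h1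
  have hint_fTs' : ∀ i, Integrable (fun x => f (Ts i x)) (μs i) := hint_fTs
  have hint_fT' : ∀ i, Integrable (fun x => f (T x)) (μs i) := hint_fT
  have hint_g : ∀ i, Integrable g (μs i) := fun i => by
    haveI := hμs i
    exact hgc.integrable_of_hasCompactSupport hgsupp
  -- rewrite the integrals via change of variables
  have hmap : ∀ i, (∫ x, f x ∂(Measure.map (Ts i) (μs i))) = ∫ x, f (Ts i x) ∂(μs i) :=
    fun i => integral_map (Ts i).continuous.aemeasurable hfc.aestronglyMeasurable
  have hmapT : (∫ x, f x ∂(Measure.map T μ)) = ∫ x, f (T x) ∂μ :=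
    integral_map T.continuous.aemeasurable hfc.aestronglyMeasurable
  simp only [hmap, hmapT]
  -- second term converges
  have h2 : Tendsto (fun i => ∫ x, f (T x) ∂(μs i)) atTop (𝓝 (∫ x, f (T x) ∂μ)) :=
    hconv (f ∘ T) hfTc hfT_supp
  -- ∫ g converges, hence is eventually bounded
  have hgconv : Tendsto (fun i => ∫ x, g x ∂(μs i)) atTop (𝓝 (∫ x, g x ∂μ)) :=
    hconv g hgc hgsupp
  set C : ℝ := (∫ x, g x ∂μ) + 1 with hC
  have hCpos : 0 < C := by
    have : 0 ≤ ∫ x, g x ∂μ := integral_nonneg hgnonneg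
    linarith
  have hgbdd : ∀ᶠ i in atTop, (∫ x, g x ∂(μs i)) ≤ C := by
    filter_upwards [hgconv (Iio_mem_nhds (by linarith : (∫ x, g x ∂μ) < C))] with i hi
    exact le_of_lt hi
  -- first term tends to 0
  have h1 : Tendsto (fun i => (∫ x, f (Ts i x) ∂(μs i)) - ∫ x, f (T x) ∂(μs i))
      atTop (𝓝 0) := by
    rw [NormedAddCommGroup.tendsto_nhds_zero]
    intro ε hε
    set ε' : ℝ := ε / (2 * C) with hε'
    have hε'pos : 0 < ε' := div_pos hε (by linarith)
    obtain ⟨δ, hδpos, hδ⟩ := Metric.uniformContinuous_iff.1 hfu ε' hε'pos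
    have hTev := (Metric.tendstoUniformlyOn_iff.1 (hTconv K hKcompact)) δ hδpos
    filter_upwards [hsuppev, hTev, hgbdd] with i hsupp hTi hgB
    -- pointwise bound : ‖f (Ts i x) - f (T x)‖ ≤ ε' * g x
    have hpt : ∀ x, ‖f (Ts i x) - f (T x)‖ ≤ ε' * g x := by
      intro x
      by_cases hx : x ∈ K
      · have hd : dist (Ts i x) (T x) < δ := by
          have := hTi x hx
          simpa [dist_comm] using this
        have : dist (f (Ts i x)) (f (T x)) < ε' := hδ hd
        have hgx : g x = 1 := hg1 hx
        rw [hgx, mul_one]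
        rw [Real.dist_eq] at this
        exact le_of_lt this
      · have h1x : f (Ts i x) = 0 := by
          by_contra hne
          exact hx (hsupp (subset_tsupport _ hne))
        have h2x : f (T x) = 0 := by
          by_contra hne
          exact hx (hfT_suppK (subset_tsupport _ hne))
        rw [h1x, h2x, sub_zero, norm_zero]
        exact mul_nonneg hε'pos.le (hgnonneg x)
    have hεC : ε' * C < ε := by
      rw [hε', div_mul_eq_mul_div]
      rw [div_lt_iff₀ (by linarith : (0:ℝ) < 2 * C)]
      nlinarith
    calc ‖(∫ x, f (Ts i x) ∂(μs i)) - ∫ x, f (T x) ∂(μs i)‖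
        = ‖∫ x, (f (Ts i x) - f (T x)) ∂(μs i)‖ := by
          rw [integral_sub (hint_fTs' i) (hint_fT' i)]
      _ ≤ ∫ x, ‖f (Ts i x) - f (T x)‖ ∂(μs i) := norm_integral_le_integral_norm _
      _ ≤ ∫ x, ε' * g x ∂(μs i) := by
          apply integral_mono ((hint_fTs' i).sub (hint_fT' i)).norm
            ((hint_g i).const_mul ε')
          exact hpt
      _ = ε' * ∫ x, g x ∂(μs i) := integral_const_mul _ _
      _ ≤ ε' * C := by
          exact mul_le_mul_of_nonneg_left hgB (le_of_lt hε'pos)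
      _ < ε := hεC
  have := h1.add h2
  simpa using this


end
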